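/- Let ς be a d-inflator on K. If α ∈ K specializes to φ ∈ End_R(M) and α′ ∈ K specializes to φ′ ∈ End_R(M), then the product α·α′ specializes to the composition φ ∘ φ′. -/

import Mathlib

/-- The length of a module, as the Krull dimension of its submodule lattice. -/
noncomputable def moduleLength (R M : Type*) [Ring R] [AddCommGroup M] [Module R M] :
    WithBot ℕ∞ :=
  Order.krullDim (Submodule R M)

/-- The "direct sum" of a submodule of `Fin n → N` and a submodule of `Fin m → N`,
as a submodule of `Fin (n+m) → N`, under the standard identification. -/
def Submodule.finDSum {S N : Type*} [Ring S] [AddCommGroup N] [Module S N] {n m : ℕ}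
    (V : Submodule S (Fin n → N)) (W : Submodule S (Fin m → N)) :
    Submodule S (Fin (n + m) → N) where
  carrier := {x | (fun i => x (Fin.castAdd m i)) ∈ V ∧ (fun j => x (Fin.natAdd n j)) ∈ W}
  add_mem' := by
    rintro x y ⟨hx1, hx2⟩ ⟨hy1, hy2⟩
    exact ⟨V.add_mem hx1 hy1, W.add_mem hx2 hy2⟩
  zero_mem' := ⟨V.zero_mem, W.zero_mem⟩
  smul_mem' := by
    rintro c x ⟨hx1, hx2⟩
    exact ⟨V.smul_mem c hx1, W.smul_mem c hx2⟩

/-- The coordinatewise action of a `K₀`-matrix on `Fin m → N`, where `N` carries commuting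
`K₀`- and `S`-actions, as an `S`-linear map. -/
def matVec {K₀ S N : Type*} [CommRing K₀] [Ring S] [AddCommGroup N] [Module S N]
    [Module K₀ N] [SMulCommClass K₀ S N] {n m : ℕ}
    (μ : Matrix (Fin n) (Fin m) K₀) : (Fin m → N) →ₗ[S] (Fin n → N) where
  toFun x := fun i => ∑ j, μ i j • x j
  map_add' x y := by
    funext i
    simp [smul_add, Finset.sum_add_distrib]
  map_smul' c x := by
    funext i
    simp only [Pi.smul_apply, RingHom.id_apply, Finset.smul_sum]
    exact Finset.sum_congr rfl fun j _ => smul_comm _ _ _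

/-- The graph `{(x, a·x) : x ∈ K}` as a `K`-subspace of `K² = Fin 2 → K`. -/
def graphK (K : Type*) [Field K] (a : K) : Submodule K (Fin 2 → K) where
  carrier := {v | v 1 = a * v 0}
  add_mem' := by
    intro x y hx hy
    simp only [Set.mem_setOf_eq, Pi.add_apply] at *
    rw [hx, hy]; ring
  zero_mem' := by simp
  smul_mem' := by
    intro c x hx
    simp only [Set.mem_setOf_eq, Pi.smul_apply, smul_eq_mul] at *
    rw [hx]; ring

/-- The graph `{(u, φ(u)) : u ∈ M}` of an endomorphism, as an `R`-submodule of `M²`. -/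
def graphM {R M : Type*} [Ring R] [AddCommGroup M] [Module R M] (φ : Module.End R M) :
    Submodule R (Fin 2 → M) where
  carrier := {v | v 1 = φ (v 0)}
  add_mem' := by
    intro x y hx hy
    simp only [Set.mem_setOf_eq, Pi.add_apply] at *
    rw [hx, hy, map_add]
  zero_mem' := by simp
  smul_mem' := by
    intro c x hx
    simp only [Set.mem_setOf_eq, Pi.smul_apply] at *
    rw [hx, map_smul]

/-- A `d`-inflator on `K`, with target the pair `(R, M)`. -/
structure Inflator (K₀ K R M : Type*) [Field K₀] [Field K] [Algebra K₀ K]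
    [Ring R] [Algebra K₀ R] [AddCommGroup M] [Module R M] [Module K₀ M]
    [SMulCommClass K₀ R M] (d : ℕ) where
  ς : ∀ n : ℕ, Submodule K (Fin n → K) → Submodule R (Fin n → M)
  mono : ∀ (n : ℕ) (V W : Submodule K (Fin n → K)), V ≤ W → ς n V ≤ ς n W
  map_dsum : ∀ (n m : ℕ) (V : Submodule K (Fin n → K)) (W : Submodule K (Fin m → K)),
    ς (n + m) (V.finDSum W) = (ς n V).finDSum (ς m W)
  equivariant : ∀ (n : ℕ) (μ : Matrix (Fin n) (Fin n) K₀), IsUnit μ →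
    ∀ V : Submodule K (Fin n → K),
      ς n (V.map (matVec (S := K) (N := K) μ)) = (ς n V).map (matVec (S := R) (N := M) μ)
  length_eq : ∀ (n : ℕ) (V : Submodule K (Fin n → K)),
    moduleLength R (ς n V) = ((d * Module.finrank K V : ℕ) : ℕ∞)

namespace Inflator

variable {K₀ K R M : Type*} [Field K₀] [Field K] [Algebra K₀ K]
    [Ring R] [Algebra K₀ R] [AddCommGroup M] [Module R M] [Module K₀ M]
    [SMulCommClass K₀ R M] {d : ℕ}

/-- `a ∈ K` specializes to the endomorphism `φ` of `M`. -/
def Specializes (I : Inflator K₀ K R M d) (a : K) (φ : Module.End R M) : Prop :=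
  I.ς 2 (graphK K a) = graphM φ

/-- The fundamental ring of an inflator, as a subset of `K`. -/
def fundSet (I : Inflator K₀ K R M d) : Set K :=
  {a | ∃ φ : Module.End R M, I.Specializes a φ}

/-- The fundamental ideal of an inflator, as a subset of `K`. -/
def fundIdealSet (I : Inflator K₀ K R M d) : Set K :=
  {a | I.Specializes a 0}

end Inflator

/-!
Put `D = {(x, α'x, αα'x)} ≤ K³`. It lies in `Θ_{α'} ⊕ K` and in `K ⊕ Θ_α`, and `ς₁ K = M`
because both have length `d`; so `ς₃ D` lies in `{(u, φ'u, φφ'u)}`, and equal lengths make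
this an equality. After swapping the last two coordinates, `D` also lies in
`Θ_{αα'} ⊕ K`; equivariance under that permutation matrix then puts the graph of `φφ'` inside
`ς₂ Θ_{αα'}`, and equal lengths again force equality.
-/

section Length

variable {R Q : Type*} [Ring R] [AddCommGroup Q] [Module R Q]

lemma moduleLength_eq_coe_length : moduleLength R Q = Module.length R Q :=
  (Module.coe_length R Q).symm

lemma Submodule.eq_of_le_of_length_eq {N P : Submodule R Q} (hle : N ≤ P)
    (hP : Module.length R P ≠ ⊤) (h : Module.length R N = Module.length R P) : N = P := by
  by_contra hne
  have hfin : Order.height N < ⊤ := by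
    rw [← Module.length_submodule, h]
    exact hP.lt_top
  have hlt := Order.height_strictMono (hle.lt_of_ne hne) hfin
  rw [← Module.length_submodule, ← Module.length_submodule, h] at hlt
  exact hlt.false

end Length

section Graphs

variable {S N : Type*} [Ring S] [AddCommGroup N] [Module S N]

lemma graphK_eq_graphM_mulLeft (K : Type*) [Field K] (a : K) :
    graphK K a = graphM (LinearMap.mulLeft K a) :=
  rfl

def graphMEquiv (f : Module.End S N) : graphM f ≃ₗ[S] N where
  toFun v := v.1 0
  map_add' _ _ := rfl
  map_smul' _ _ := rfl
  invFun u := ⟨![u, f u], rfl⟩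
  left_inv v := by
    ext i
    fin_cases i
    · rfl
    · exact v.2.symm
  right_inv _ := rfl

lemma finrank_graphK {K : Type*} [Field K] (a : K) : Module.finrank K (graphK K a) = 1 :=
  (graphMEquiv (LinearMap.mulLeft K a)).finrank_eq.trans (Module.finrank_self K)

def compGraph (f g : Module.End S N) : Submodule S (Fin 3 → N) where
  carrier := {u | u 1 = g (u 0) ∧ u 2 = f (u 1)}
  add_mem' := by
    rintro x y ⟨hx₁, hx₂⟩ ⟨hy₁, hy₂⟩
    exact ⟨by simp [hx₁, hy₁], by simp [hx₂, hy₂]⟩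
  zero_mem' := by simp
  smul_mem' := by
    rintro c x ⟨hx₁, hx₂⟩
    exact ⟨by simp [hx₁], by simp [hx₂]⟩

lemma compGraph_eq_inf (f g : Module.End S N) :
    compGraph f g =
      (graphM g).finDSum (⊤ : Submodule S (Fin 1 → N)) ⊓
        (⊤ : Submodule S (Fin 1 → N)).finDSum (graphM f) := by
  ext u
  simp only [Submodule.mem_inf]
  exact ⟨fun ⟨h₁, h₂⟩ => ⟨⟨h₁, trivial⟩, ⟨trivial, h₂⟩⟩,
    fun ⟨⟨h₁, _⟩, ⟨_, h₂⟩⟩ => ⟨h₁, h₂⟩⟩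

def compGraphEquiv (f g : Module.End S N) : compGraph f g ≃ₗ[S] N where
  toFun v := v.1 0
  map_add' _ _ := rfl
  map_smul' _ _ := rfl
  invFun u := ⟨![u, g u, f (g u)], rfl, rfl⟩
  left_inv v := by
    ext i
    fin_cases i
    · rfl
    · exact v.2.1.symm
    · exact (v.2.2.trans (congrArg f v.2.1)).symm
  right_inv _ := rfl

end Graphs

section Permutations

variable {K₀ S N : Type*} [CommRing K₀] [Ring S] [AddCommGroup N] [Module S N]
  [Module K₀ N] [SMulCommClass K₀ S N] {n : ℕ}

lemma isUnit_permMatrix (σ : Equiv.Perm (Fin n)) : IsUnit (σ.permMatrix K₀) :=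
  (Matrix.isUnit_iff_isUnit_det _).mpr <| by
    rw [Matrix.det_permutation]
    exact (Equiv.Perm.sign σ).isUnit.map (Int.castRingHom K₀)

lemma matVec_permMatrix (σ : Equiv.Perm (Fin n)) (x : Fin n → N) :
    matVec (S := S) (σ.permMatrix K₀) x = x ∘ σ := by
  funext i
  simp [matVec, PEquiv.toMatrix_apply, ite_smul]

lemma Submodule.mem_map_matVec_permMatrix (σ : Equiv.Perm (Fin n))
    (V : Submodule S (Fin n → N)) (x : Fin n → N) :
    x ∈ V.map (matVec (σ.permMatrix K₀)) ↔ x ∘ σ.symm ∈ V := by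
  have : matVec (S := S) (N := N) (σ.permMatrix K₀) =
      (LinearEquiv.funCongrLeft S N σ).toLinearMap :=
    LinearMap.ext (matVec_permMatrix σ)
  rw [this, Submodule.mem_map_equiv]
  rfl

variable (K₀) in
lemma mem_map_swap_finDSum_top_iff (P : Submodule S (Fin 2 → N)) (x : Fin 3 → N) :
    x ∈ (P.finDSum (⊤ : Submodule S (Fin 1 → N))).map
        (matVec ((Equiv.swap 1 2 : Equiv.Perm (Fin 3)).permMatrix K₀)) ↔ ![x 0, x 2] ∈ P := by
  rw [Submodule.mem_map_matVec_permMatrix]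
  refine (and_iff_left trivial).trans (iff_of_eq (congrArg (· ∈ P) ?_))
  funext i
  fin_cases i <;> rfl

variable (K₀) in
lemma compGraph_le_map_swap_iff (f g : Module.End S N) (P : Submodule S (Fin 2 → N)) :
    compGraph f g ≤ (P.finDSum (⊤ : Submodule S (Fin 1 → N))).map
        (matVec ((Equiv.swap 1 2 : Equiv.Perm (Fin 3)).permMatrix K₀)) ↔
      graphM (f * g) ≤ P := by
  simp only [SetLike.le_def, mem_map_swap_finDSum_top_iff]
  constructor
  · intro h v hv
    convert h (show ![v 0, g (v 0), v 1] ∈ compGraph f g from ⟨rfl, hv⟩) using 1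
    funext i
    fin_cases i <;> rfl
  · rintro h u ⟨hu₁, hu₂⟩
    exact h (hu₂.trans (congrArg f hu₁))

end Permutations

namespace Inflator

variable {K₀ K R M : Type*} [Field K₀] [Field K] [Algebra K₀ K]
    [Ring R] [Algebra K₀ R] [AddCommGroup M] [Module R M] [Module K₀ M]
    [SMulCommClass K₀ R M] {d : ℕ} (I : Inflator K₀ K R M d)

lemma length_ς_of_finrank_eq_one {n : ℕ} {V : Submodule K (Fin n → K)}
    (hV : Module.finrank K V = 1) : Module.length R (I.ς n V) = d := by
  have h := I.length_eq n V
  rw [hV, mul_one, moduleLength_eq_coe_length] at h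
  exact_mod_cast h

lemma ς_eq_of_le (hM : Module.length R M = d) {n : ℕ} {V : Submodule K (Fin n → K)}
    (hV : Module.finrank K V = 1) {P : Submodule R (Fin n → M)} (e : P ≃ₗ[R] M)
    (hle : I.ς n V ≤ P) : I.ς n V = P :=
  Submodule.eq_of_le_of_length_eq hle (by simp [e.length_eq, hM])
    (by rw [I.length_ς_of_finrank_eq_one hV, e.length_eq, hM])

lemma ς_eq_of_ge (hM : Module.length R M = d) {n : ℕ} {V : Submodule K (Fin n → K)}
    (hV : Module.finrank K V = 1) {P : Submodule R (Fin n → M)} (e : P ≃ₗ[R] M)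
    (hle : P ≤ I.ς n V) : I.ς n V = P :=
  (Submodule.eq_of_le_of_length_eq hle (by simp [I.length_ς_of_finrank_eq_one hV])
    (by rw [I.length_ς_of_finrank_eq_one hV, e.length_eq, hM])).symm

lemma ς_one_top (hM : Module.length R M = d) : I.ς 1 ⊤ = ⊤ :=
  I.ς_eq_of_le hM (by simp) (Submodule.topEquiv.trans (LinearEquiv.funUnique (Fin 1) R M))
    le_top

lemma ς_finDSum_top (hM : Module.length R M = d) {n : ℕ} (V : Submodule K (Fin n → K)) :
    I.ς (n + 1) (V.finDSum ⊤) = (I.ς n V).finDSum ⊤ := by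
  rw [I.map_dsum, I.ς_one_top hM]

lemma ς_top_finDSum (hM : Module.length R M = d) {n : ℕ} (V : Submodule K (Fin n → K)) :
    I.ς (1 + n) ((⊤ : Submodule K (Fin 1 → K)).finDSum V) =
      (⊤ : Submodule R _).finDSum (I.ς n V) := by
  rw [I.map_dsum, I.ς_one_top hM]

lemma ς_inf_le {n : ℕ} (V W : Submodule K (Fin n → K)) :
    I.ς n (V ⊓ W) ≤ I.ς n V ⊓ I.ς n W :=
  le_inf (I.mono n _ _ inf_le_left) (I.mono n _ _ inf_le_right)

lemma ς_map_permMatrix {n : ℕ} (σ : Equiv.Perm (Fin n)) (V : Submodule K (Fin n → K)) :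
    I.ς n (V.map (matVec (σ.permMatrix K₀))) = (I.ς n V).map (matVec (σ.permMatrix K₀)) :=
  I.equivariant n _ (isUnit_permMatrix σ) V

lemma ς_compGraph (hM : Module.length R M = d) {a b : K} {φ ψ : Module.End R M}
    (ha : I.Specializes a φ) (hb : I.Specializes b ψ) :
    I.ς 3 (compGraph (LinearMap.mulLeft K a) (LinearMap.mulLeft K b)) = compGraph φ ψ := by
  refine I.ς_eq_of_le hM ?_ (compGraphEquiv φ ψ) ?_
  · exact (compGraphEquiv _ _).finrank_eq.trans (Module.finrank_self K)
  · calc I.ς 3 (compGraph (LinearMap.mulLeft K a) (LinearMap.mulLeft K b))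
          ≤ I.ς (2 + 1) ((graphK K b).finDSum (⊤ : Submodule K (Fin 1 → K))) ⊓
              I.ς (1 + 2) ((⊤ : Submodule K (Fin 1 → K)).finDSum (graphK K a)) := by
            rw [compGraph_eq_inf]
            exact I.ς_inf_le _ _
        _ = compGraph φ ψ := by
            rw [I.ς_finDSum_top hM, I.ς_top_finDSum hM, ha, hb, compGraph_eq_inf]

end Inflator

theorem specializes_mul_general
    {K₀ K R M : Type*} [Field K₀] [Field K] [Algebra K₀ K]
    [Ring R] [Algebra K₀ R] [AddCommGroup M] [Module R M] [Module K₀ M]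
    [SMulCommClass K₀ R M] {d : ℕ}
    (hM : moduleLength R M = ((d : ℕ∞) : WithBot ℕ∞))
    (I : Inflator K₀ K R M d) (α α' : K) (φ φ' : Module.End R M)
    (h : I.Specializes α φ) (h' : I.Specializes α' φ') :
    I.Specializes (α * α') (φ * φ') := by
  replace hM : Module.length R M = d := by
    rw [moduleLength_eq_coe_length] at hM
    exact_mod_cast hM
  set σ : Equiv.Perm (Fin 3) := Equiv.swap 1 2
  have hK : compGraph (LinearMap.mulLeft K α) (LinearMap.mulLeft K α') ≤
      ((graphK K (α * α')).finDSum (⊤ : Submodule K (Fin 1 → K))).map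
        (matVec (σ.permMatrix K₀)) :=
    (compGraph_le_map_swap_iff K₀ _ _ _).mpr <| by
      rw [graphK_eq_graphM_mulLeft, LinearMap.mulLeft_mul]
      rfl
  have hR : compGraph φ φ' ≤
      ((I.ς 2 (graphK K (α * α'))).finDSum (⊤ : Submodule R (Fin 1 → M))).map
        (matVec (σ.permMatrix K₀)) := by
    rw [← I.ς_compGraph hM h h', ← I.ς_finDSum_top hM, ← I.ς_map_permMatrix]
    exact I.mono 3 _ _ hK
  exact I.ς_eq_of_ge hM (finrank_graphK _) (graphMEquiv _)
    ((compGraph_le_map_swap_iff K₀ _ _ _).mp hR)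

/-- If `α` specializes to `φ` and `α′` specializes to `φ′` under a `d`-inflator, then
`α·α′` specializes to the composition `φ ∘ φ′`. -/
theorem specializes_mul
    {K₀ K R M : Type*} [Field K₀] [Infinite K₀] [Field K] [Algebra K₀ K]
    [Ring R] [Algebra K₀ R] [AddCommGroup M] [Module R M] [Module K₀ M]
    [SMulCommClass K₀ R M] {d : ℕ} (hd : 1 ≤ d) [IsSemisimpleModule R M]
    (hM : moduleLength R M = ((d : ℕ∞) : WithBot ℕ∞))
    (I : Inflator K₀ K R M d) (α α' : K) (φ φ' : Module.End R M)
    (h : I.Specializes α φ) (h' : I.Specializes α' φ') :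
    I.Specializes (α * α') (φ * φ') :=
  specializes_mul_general hM I α α' φ φ' h h'
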